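/- Let n = 2^m and v be an integer point of the Hadamard polytope Had, written uniquely as a convex combination v = Σ_{c ∈ F_2^m} t_c h_c of the vertices. Then the set T(v) = {c : t_c ≠ 0} is an affine coset of the form supp(v)^⊥ + b for some b ∈ F_2^m, and v = (1/|T(v)|) Σ_{c ∈ T(v)} h_c, i.e., v is a uniform average of the vertices indexed by T(v). -/

import Mathlib

open scoped BigOperators Classical

noncomputable section

/-- `F m` is the vector space `𝔽₂^m`. -/
abbrev F (m : ℕ) := Fin m → ZMod 2

/-- The standard dot product on `𝔽₂^m`. -/
def dotF {m : ℕ} (a b : F m) : ZMod 2 := ∑ i, a i * b i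

/-- `had c` is the column of the Hadamard matrix indexed by `c`: `had c a = (-1)^⟨a,c⟩`. -/
def had {m : ℕ} (c : F m) : F m → ℝ := fun a => (-1 : ℝ) ^ (dotF a c).val

/-- The Hadamard polytope: the convex hull of the columns of the Hadamard matrix. -/
def Had (m : ℕ) : Set (F m → ℝ) := convexHull ℝ (Set.range (had (m := m)))

/-- A vector has all integer coordinates. -/
def IsIntPoint {ι : Type*} (v : ι → ℝ) : Prop := ∀ a, ∃ z : ℤ, v a = z

lemma zmod2_pow_add (x y : ZMod 2) :
    (-1:ℝ)^(x+y).val = (-1)^x.val * (-1)^y.val := by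
  have hv : ∀ x y : ZMod 2, (x+y).val = (x.val + y.val) % 2 := by decide
  rw [hv, ← pow_add, ← neg_one_pow_eq_pow_mod_two]

lemma zmod2_pow_inj {x y : ZMod 2} (h : (-1:ℝ)^x.val = (-1)^y.val) : x = y := by
  have h01 : ∀ x : ZMod 2, x = 0 ∨ x = 1 := by decide
  rcases h01 x with rfl | rfl <;> rcases h01 y with rfl | rfl <;>
    simp [ZMod.val_one] at h ⊢ <;> norm_num at h

lemma dotF_add_right {m : ℕ} (a c c' : F m) : dotF a (c + c') = dotF a c + dotF a c' := by
  simp [dotF, mul_add, Finset.sum_add_distrib]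

lemma dotF_add_left {m : ℕ} (a a' c : F m) : dotF (a + a') c = dotF a c + dotF a' c := by
  simp [dotF, add_mul, Finset.sum_add_distrib]

lemma had_mul {m : ℕ} (c c' : F m) (a : F m) : had c a * had c' a = had (c + c') a := by
  simp [had, dotF_add_right, zmod2_pow_add]

lemma dotF_single {m : ℕ} (i : Fin m) (c : F m) : dotF (Pi.single i 1) c = c i := by
  simp [dotF, Pi.single_apply, ite_mul]

lemma char_sum {m : ℕ} {d : F m} (hd : d ≠ 0) : ∑ a : F m, had d a = 0 := by
  obtain ⟨i, hi⟩ : ∃ i, d i ≠ 0 := by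
    by_contra h; push_neg at h; exact hd (funext h)
  have hdi : d i = 1 := (show ∀ x : ZMod 2, x ≠ 0 → x = 1 by decide) _ hi
  have key : ∀ a : F m, had d (Pi.single i 1 + a) = - had d a := by
    intro a
    have h1 : dotF (Pi.single i 1 + a) d = 1 + dotF a d := by
      rw [dotF_add_left, dotF_single, hdi]
    simp [had, h1, zmod2_pow_add, show ((1:ZMod 2)).val = 1 from rfl]
  have h2 : ∑ a : F m, had d a = ∑ a : F m, had d (Pi.single i 1 + a) :=
    (Fintype.sum_equiv (Equiv.addLeft (Pi.single i 1)) _ _ (fun a => rfl)).symm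
  simp only [key, Finset.sum_neg_distrib] at h2
  linarith

lemma orth {m : ℕ} (c c' : F m) :
    ∑ a : F m, had c a * had c' a = if c = c' then (2^m : ℝ) else 0 := by
  simp only [had_mul]
  split_ifs with h
  · subst h
    have h0 : c + c = 0 := by
      funext j; simp [CharTwo.add_self_eq_zero]
    have : ∀ a : F m, had (c + c) a = 1 := by
      intro a; rw [h0]; simp [had, dotF]
    simp [this, Finset.card_univ]
  · apply char_sum
    intro h0
    apply h
    funext j
    have h3 : c j + c' j = 0 := congrFun h0 j
    exact (show ∀ x y : ZMod 2, x + y = 0 → x = y by decide) _ _ h3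

lemma had_pm {m : ℕ} (c a : F m) : had c a = 1 ∨ had c a = -1 := by
  rcases Nat.even_or_odd (dotF a c).val with h | h
  · left; simp [had, h.neg_one_pow]
  · right; simp [had, h.neg_one_pow]

lemma had_abs {m : ℕ} (c a : F m) : |had c a| = 1 := by
  rcases had_pm c a with h | h <;> simp [h]

theorem int_point_coeff_support_is_coset (m : ℕ) (v : F m → ℝ)
    (hv : v ∈ Had m) (hint : IsIntPoint v)
    (t : F m → ℝ) (ht0 : ∀ c, 0 ≤ t c) (ht1 : ∑ c : F m, t c = 1)
    (htv : v = fun a => ∑ c : F m, t c * had c a)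
    (T : Finset (F m)) (hT : T = Finset.univ.filter (fun c => t c ≠ 0)) :
    (∃ b : F m, ∀ c : F m, c ∈ T ↔ ∀ a : F m, v a ≠ 0 → dotF a c = dotF a b) ∧
    v = fun a => (T.card : ℝ)⁻¹ * ∑ c ∈ T, had c a := by
  classical
  have hmemT : ∀ c, c ∈ T ↔ t c ≠ 0 := by
    intro c; simp [hT]
  -- v a ∈ {0, 1, -1}
  have hva : ∀ a, v a = 0 ∨ v a = 1 ∨ v a = -1 := by
    intro a
    obtain ⟨z, hz⟩ := hint a
    have hb : |v a| ≤ 1 := by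
      rw [htv]
      calc |∑ c : F m, t c * had c a| ≤ ∑ c : F m, |t c * had c a| :=
            Finset.abs_sum_le_sum_abs _ _
        _ = ∑ c : F m, t c := by
            apply Finset.sum_congr rfl
            intro c _
            rw [abs_mul, had_abs, mul_one, abs_of_nonneg (ht0 c)]
        _ = 1 := ht1
    rw [hz] at hb ⊢
    have hz1 : |z| ≤ 1 := by exact_mod_cast hb
    obtain ⟨h1, h2⟩ := abs_le.mp hz1
    interval_cases z <;> simp
  -- key1 : for c ∈ T and a with v a ≠ 0, had c a = v a
  have key1 : ∀ c ∈ T, ∀ a, v a ≠ 0 → had c a = v a := by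
    intro c hc a ha
    have hsq : v a * v a = 1 := by
      rcases hva a with h | h | h
      · exact absurd h ha
      · rw [h]; ring
      · rw [h]; ring
    have hzero : ∑ c' : F m, t c' * (1 - v a * had c' a) = 0 := by
      have expand : ∑ c' : F m, t c' * (1 - v a * had c' a)
          = (∑ c' : F m, t c') - v a * ∑ c' : F m, t c' * had c' a := by
        rw [Finset.mul_sum, ← Finset.sum_sub_distrib]
        apply Finset.sum_congr rfl
        intro c' _; ring
      rw [expand, ht1]
      have : ∑ c' : F m, t c' * had c' a = v a := by rw [htv]
      rw [this, hsq]; ring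
    have hnn : ∀ c' ∈ Finset.univ, (0:ℝ) ≤ t c' * (1 - v a * had c' a) := by
      intro c' _
      apply mul_nonneg (ht0 c')
      have : v a * had c' a ≤ 1 := by
        have h1 : |v a * had c' a| ≤ 1 := by
          rw [abs_mul, had_abs, mul_one]
          rcases hva a with h | h | h <;> simp [h]
        exact (abs_le.mp h1).2
      linarith
    have := (Finset.sum_eq_zero_iff_of_nonneg hnn).mp hzero c (Finset.mem_univ c)
    have htc : t c ≠ 0 := (hmemT c).mp hc
    have h2 : 1 - v a * had c a = 0 := by
      rcases mul_eq_zero.mp this with h | h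
      · exact absurd h htc
      · exact h
    have h3 : v a * had c a = 1 := by linarith
    calc had c a = (v a * v a) * had c a := by rw [hsq]; ring
      _ = v a * (v a * had c a) := by ring
      _ = v a := by rw [h3]; ring
  -- Fourier inversion
  have fourier : ∀ c : F m, ∑ a : F m, v a * had c a = t c * 2^m := by
    intro c
    calc ∑ a : F m, v a * had c a
        = ∑ a : F m, ∑ c' : F m, t c' * (had c' a * had c a) := by
          apply Finset.sum_congr rfl
          intro a _
          rw [htv, Finset.sum_mul]
          apply Finset.sum_congr rfl
          intro c' _; ring
      _ = ∑ c' : F m, t c' * ∑ a : F m, had c' a * had c a := by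
          rw [Finset.sum_comm]
          apply Finset.sum_congr rfl
          intro c' _
          rw [Finset.mul_sum]
      _ = ∑ c' : F m, t c' * (if c' = c then (2^m : ℝ) else 0) := by
          simp only [orth]
      _ = t c * 2^m := by
          simp [mul_ite, mul_zero]
  -- T is nonempty
  have hTne : T.Nonempty := by
    by_contra h
    rw [Finset.not_nonempty_iff_eq_empty] at h
    have : ∑ c : F m, t c = 0 := by
      apply Finset.sum_eq_zero
      intro c _
      by_contra hc
      have : c ∈ T := (hmemT c).mpr hc
      simp [h] at this
    rw [ht1] at this; norm_num at this
  obtain ⟨b, hb⟩ := hTne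
  -- backward direction: if c agrees with b on supp v, then t c = t b
  have key2 : ∀ c : F m, (∀ a : F m, v a ≠ 0 → dotF a c = dotF a b) → t c = t b := by
    intro c hc
    have hsum : ∑ a : F m, v a * had c a = ∑ a : F m, v a * had b a := by
      apply Finset.sum_congr rfl
      intro a _
      by_cases ha : v a = 0
      · simp [ha]
      · have : dotF a c = dotF a b := hc a ha
        simp [had, this]
    have h1 := fourier c
    have h2 := fourier b
    rw [hsum, h2] at h1
    have h2m : (2:ℝ)^m ≠ 0 := by positivity
    exact (mul_right_cancel₀ h2m h1).symm
  -- the characterization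
  have hchar : ∀ c : F m, c ∈ T ↔ ∀ a : F m, v a ≠ 0 → dotF a c = dotF a b := by
    intro c
    constructor
    · intro hc a ha
      have h1 : had c a = v a := key1 c hc a ha
      have h2 : had b a = v a := key1 b hb a ha
      exact zmod2_pow_inj (h1.trans h2.symm)
    · intro hcond
      have : t c = t b := key2 c hcond
      rw [hmemT, this]
      exact (hmemT b).mp hb
  -- t is constant 1/|T| on T
  have htconst : ∀ c ∈ T, t c = t b := by
    intro c hc
    exact key2 c ((hchar c).mp hc)
  have hsumT : ∑ c ∈ T, t c = 1 := by
    rw [← ht1]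
    apply Finset.sum_subset (Finset.subset_univ T)
    intro c _ hc
    by_contra h
    exact hc ((hmemT c).mpr h)
  have hcard : (T.card : ℝ) * t b = 1 := by
    rw [← hsumT, Finset.sum_congr rfl htconst, Finset.sum_const, nsmul_eq_mul]
  have hcard0 : (T.card : ℝ) ≠ 0 := by
    intro h
    rw [h, zero_mul] at hcard
    norm_num at hcard
  have htb : t b = (T.card : ℝ)⁻¹ := by
    field_simp at hcard ⊢
    linarith
  refine ⟨⟨b, hchar⟩, ?_⟩
  funext a
  rw [htv]
  simp only []
  have : ∑ c : F m, t c * had c a = ∑ c ∈ T, t c * had c a := by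
    symm
    apply Finset.sum_subset (Finset.subset_univ T)
    intro c _ hc
    have : t c = 0 := by
      by_contra h
      exact hc ((hmemT c).mpr h)
    rw [this, zero_mul]
  rw [this, Finset.mul_sum]
  apply Finset.sum_congr rfl
  intro c hc
  rw [htconst c hc, htb]
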